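/- Entropy conservation of the EC flux in the y-direction (appendix Corollary). Let left and right ideal MHD states be given (both with ρ > 0, p > 0) and define ρ̂ = ⟨z₁⟩z₅ˡⁿ, û₁ = ⟨z₂⟩/⟨z₁⟩, v̂₁ = ⟨z₃⟩/⟨z₁⟩, ŵ₁ = ⟨z₄⟩/⟨z₁⟩, p̂₁ = ⟨z₅⟩/⟨z₁⟩, p̂₂ = ((γ+1)/(2γ))·z₅ˡⁿ/z₁ˡⁿ + ((γ−1)/(2γ))·⟨z₅⟩/⟨z₁⟩, û₂ = ⟨z₁z₂⟩/⟨z₁²⟩, v̂₂ = ⟨z₁z₃⟩/⟨z₁²⟩, ŵ₂ = ⟨z₁z₄⟩/⟨z₁²⟩, B̂₁ = ⟨z₆⟩, B̂₂ = ⟨z₇⟩, B̂₃ = ⟨z₈⟩. Define g* ∈ ℝ⁸ by g₁* = ρ̂v̂₁; g₂* = ρ̂û₁v̂₁ − ⟨z₆z₇⟩; g₃* = p̂₁ + ρ̂v̂₁² + (⟨z₆²⟩+⟨z₇²⟩+⟨z₈²⟩)/2 − ⟨z₇²⟩; g₄* = ρ̂v̂₁ŵ₁ − ⟨z₇z₈⟩;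 g₅* = γv̂₁p̂₂/(γ−1) + (ρ̂v̂₁/2)(û₁²+v̂₁²+ŵ₁²) + v̂₂B̂₁² − û₂B̂₁B̂₂ + v̂₂B̂₃² − ŵ₂B̂₂B̂₃; g₆* = v̂₂B̂₁ − û₂B̂₂; g₇* = 0; g₈* = v̂₂B̂₃ − ŵ₂B̂₂. Then ⟦v⃗⟧·g* = ⟦ρv⟧ + ⟦ρv‖B⃗‖²/(2p)⟧ − ⟦ρB₂(u⃗·B⃗)/p⟧ + ⟦B₂⟧·(⟨z₁z₂⟩⟨z₆⟩ + ⟨z₁z₃⟩⟨z₇⟩ + ⟨z₁z₄⟩⟨z₈⟩), where the last term is minus the contribution of the paper's Janhunen source term discretization in the y-direction. -/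

import Mathlib

open Real Matrix

/-- An ideal MHD state: density, velocity components, pressure, magnetic field components. -/
structure MHD where
  ρ : ℝ
  u : ℝ
  v : ℝ
  w : ℝ
  p : ℝ
  B1 : ℝ
  B2 : ℝ
  B3 : ℝ

namespace MHD

noncomputable section

/-- ‖u⃗‖² -/
def uSq (S : MHD) : ℝ := S.u ^ 2 + S.v ^ 2 + S.w ^ 2

/-- ‖B⃗‖² -/
def BSq (S : MHD) : ℝ := S.B1 ^ 2 + S.B2 ^ 2 + S.B3 ^ 2

/-- u⃗·B⃗ -/
def uDotB (S : MHD) : ℝ := S.u * S.B1 + S.v * S.B2 + S.w * S.B3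

/-- physical entropy s = ln p − γ ln ρ -/
def ent (γ : ℝ) (S : MHD) : ℝ := Real.log S.p - γ * Real.log S.ρ

/-- total energy density ρe -/
def rhoE (γ : ℝ) (S : MHD) : ℝ := S.p / (γ - 1) + S.ρ * S.uSq / 2 + S.BSq / 2

/-- entropy density U = −ρs/(γ−1) -/
def entU (γ : ℝ) (S : MHD) : ℝ := -(S.ρ * S.ent γ) / (γ - 1)

/-- x-direction entropy flux F = uU -/
def entF (γ : ℝ) (S : MHD) : ℝ := S.u * S.entU γ

/-- the entropy variables v⃗ = U_q -/
def entVar (γ : ℝ) (S : MHD) : Fin 8 → ℝ :=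
  ![(γ - S.ent γ) / (γ - 1) - S.ρ * S.uSq / (2 * S.p),
    S.ρ * S.u / S.p, S.ρ * S.v / S.p, S.ρ * S.w / S.p,
    -(S.ρ / S.p), S.ρ * S.B1 / S.p, S.ρ * S.B2 / S.p, S.ρ * S.B3 / S.p]

/-- x-direction physical flux f⃗ -/
def fluxX (γ : ℝ) (S : MHD) : Fin 8 → ℝ :=
  ![S.ρ * S.u,
    S.ρ * S.u ^ 2 + S.p + S.BSq / 2 - S.B1 ^ 2,
    S.ρ * S.u * S.v - S.B1 * S.B2,
    S.ρ * S.u * S.w - S.B1 * S.B3,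
    S.u * (S.rhoE γ + S.p + S.BSq / 2) - S.B1 * S.uDotB,
    0,
    S.u * S.B2 - S.v * S.B1,
    S.u * S.B3 - S.w * S.B1]

/-- the parameter vector z -/
def z (S : MHD) : Fin 8 → ℝ :=
  ![Real.sqrt (S.ρ / S.p), Real.sqrt (S.ρ / S.p) * S.u, Real.sqrt (S.ρ / S.p) * S.v,
    Real.sqrt (S.ρ / S.p) * S.w, Real.sqrt (S.ρ * S.p), S.B1, S.B2, S.B3]

end

end MHD

noncomputable section

open MHD

/-- logarithmic mean: (x−y)/(ln x − ln y), with the consistent value x when x = y. -/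
def lm (x y : ℝ) : ℝ := if x = y then x else (x - y) / (Real.log x - Real.log y)

/-- arithmetic mean -/
def am (x y : ℝ) : ℝ := (x + y) / 2

/-- ⟨z_i⟩ (note: `zA L R 0` is ⟨z₁⟩, …, `zA L R 7` is ⟨z₈⟩) -/
def zA (L R : MHD) (i : Fin 8) : ℝ := am (L.z i) (R.z i)

/-- ⟨z_i z_j⟩ -/
def zP (L R : MHD) (i j : Fin 8) : ℝ := am (L.z i * L.z j) (R.z i * R.z j)

/-- ⟨z₁z₂⟩⟨z₆⟩ + ⟨z₁z₃⟩⟨z₇⟩ + ⟨z₁z₄⟩⟨z₈⟩, the x-direction source factor -/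
def srcX (L R : MHD) : ℝ :=
  zP L R 0 1 * zA L R 5 + zP L R 0 2 * zA L R 6 + zP L R 0 3 * zA L R 7

/-- the entropy conserving numerical flux of Theorem 1 (x-direction) -/
def ecFlux (γ : ℝ) (L R : MHD) : Fin 8 → ℝ :=
  ![zA L R 1 * lm (L.z 4) (R.z 4),
    zA L R 4 / zA L R 0 + (zA L R 1) ^ 2 * lm (L.z 4) (R.z 4) / zA L R 0
      + (zP L R 5 5 + zP L R 6 6 + zP L R 7 7) / 2 - zP L R 5 5,
    zA L R 1 * zA L R 2 * lm (L.z 4) (R.z 4) / zA L R 0 - zP L R 5 6,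
    zA L R 1 * zA L R 3 * lm (L.z 4) (R.z 4) / zA L R 0 - zP L R 5 7,
    (γ / (γ - 1)) * (zA L R 1 / zA L R 0) *
        (((γ + 1) / (2 * γ)) * lm (L.z 4) (R.z 4) / lm (L.z 0) (R.z 0)
          + ((γ - 1) / (2 * γ)) * (zA L R 4 / zA L R 0))
      + zA L R 1 * lm (L.z 4) (R.z 4) / 2 *
          ((zA L R 1) ^ 2 + (zA L R 2) ^ 2 + (zA L R 3) ^ 2) / (zA L R 0) ^ 2
      + (zA L R 6 / zP L R 0 0) * (zP L R 0 1 * zA L R 6 - zP L R 0 2 * zA L R 5)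
      + (zA L R 7 / zP L R 0 0) * (zP L R 0 1 * zA L R 7 - zP L R 0 3 * zA L R 5),
    0,
    (zP L R 0 1 * zA L R 6 - zP L R 0 2 * zA L R 5) / zP L R 0 0,
    (zP L R 0 1 * zA L R 7 - zP L R 0 3 * zA L R 5) / zP L R 0 0]

end

noncomputable section

open MHD

/-- the entropy conserving numerical flux in the y-direction (appendix Corollary) -/
def ecFluxY (γ : ℝ) (L R : MHD) : Fin 8 → ℝ :=
  let ρh := zA L R 0 * lm (L.z 4) (R.z 4)
  let u1 := zA L R 1 / zA L R 0
  let v1 := zA L R 2 / zA L R 0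
  let w1 := zA L R 3 / zA L R 0
  let p1 := zA L R 4 / zA L R 0
  let p2 := ((γ + 1) / (2 * γ)) * lm (L.z 4) (R.z 4) / lm (L.z 0) (R.z 0)
    + ((γ - 1) / (2 * γ)) * (zA L R 4 / zA L R 0)
  let u2 := zP L R 0 1 / zP L R 0 0
  let v2 := zP L R 0 2 / zP L R 0 0
  let w2 := zP L R 0 3 / zP L R 0 0
  let B1h := zA L R 5
  let B2h := zA L R 6
  let B3h := zA L R 7
  ![ρh * v1,
    ρh * u1 * v1 - zP L R 5 6,
    p1 + ρh * v1 ^ 2 + (zP L R 5 5 + zP L R 6 6 + zP L R 7 7) / 2 - zP L R 6 6,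
    ρh * v1 * w1 - zP L R 6 7,
    γ * v1 * p2 / (γ - 1) + (ρh * v1 / 2) * (u1 ^ 2 + v1 ^ 2 + w1 ^ 2)
      + v2 * B1h ^ 2 - u2 * B1h * B2h + v2 * B3h ^ 2 - w2 * B2h * B3h,
    v2 * B1h - u2 * B2h,
    0,
    v2 * B3h - w2 * B2h]

/-- the entropy conserving numerical flux in the z-direction (appendix Corollary) -/
def ecFluxZ (γ : ℝ) (L R : MHD) : Fin 8 → ℝ :=
  let ρh := zA L R 0 * lm (L.z 4) (R.z 4)
  let u1 := zA L R 1 / zA L R 0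
  let v1 := zA L R 2 / zA L R 0
  let w1 := zA L R 3 / zA L R 0
  let p1 := zA L R 4 / zA L R 0
  let p2 := ((γ + 1) / (2 * γ)) * lm (L.z 4) (R.z 4) / lm (L.z 0) (R.z 0)
    + ((γ - 1) / (2 * γ)) * (zA L R 4 / zA L R 0)
  let u2 := zP L R 0 1 / zP L R 0 0
  let v2 := zP L R 0 2 / zP L R 0 0
  let w2 := zP L R 0 3 / zP L R 0 0
  let B1h := zA L R 5
  let B2h := zA L R 6
  let B3h := zA L R 7
  ![ρh * w1,
    ρh * u1 * w1 - zP L R 5 7,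
    ρh * v1 * w1 - zP L R 6 7,
    p1 + ρh * w1 ^ 2 + (zP L R 5 5 + zP L R 6 6 + zP L R 7 7) / 2 - zP L R 7 7,
    γ * w1 * p2 / (γ - 1) + (ρh * w1 / 2) * (u1 ^ 2 + v1 ^ 2 + w1 ^ 2)
      + w2 * B1h ^ 2 - u2 * B1h * B3h + w2 * B2h ^ 2 - v2 * B2h * B3h,
    w2 * B1h - u2 * B3h,
    w2 * B2h - v2 * B3h,
    0]

end

/-!
With `c = z₁ = √(ρ/p)` and `d = z₅ = √(ρp)` one has `ρ = cd`, `p = d/c` and `ρ/p = c²`, so all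
entropy variables but the first are `c²·(u, v, w, -1, B₁, B₂, B₃)`, and the first one is
transcendental only through the entropy `s = ln d - ln c - γ (ln c + ln d)`. By the definition of
the logarithmic mean, `⟦ln c⟧ = ⟦c⟧/cˡⁿ` and `⟦ln d⟧ = ⟦d⟧/dˡⁿ`, so `⟦v⃗⟧·g*` becomes a rational
expression. It splits into a thermal, a kinetic and a magnetic part, each of which reduces to the
discrete product rule `⟦ab⟧ = ⟨a⟩⟦b⟧ + ⟦a⟧⟨b⟩`.
-/

theorem lm_pos {x y : ℝ} (hx : 0 < x) (hy : 0 < y) : 0 < lm x y := by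
  unfold lm
  split_ifs with h
  · exact hx
  · rcases lt_or_gt_of_ne h with hxy | hxy
    · exact div_pos_of_neg_of_neg (by linarith) (by linarith [Real.log_lt_log hx hxy])
    · exact div_pos (by linarith) (by linarith [Real.log_lt_log hy hxy])

theorem log_sub_log_eq_div_lm {x y : ℝ} (hx : 0 < x) (hy : 0 < y) :
    Real.log y - Real.log x = (y - x) / lm x y := by
  rw [eq_div_iff (lm_pos hx hy).ne']
  unfold lm
  split_ifs with h
  · simp [h]
  · have hlog : Real.log x - Real.log y ≠ 0 :=
      sub_ne_zero.2 fun e => h (Real.log_injOn_pos hx hy e)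
    field_simp
    ring

theorem kinetic_jump {cL cR uL uR uAvg : ℝ} (hu : uAvg * am cL cR = am (cL * uL) (cR * uR)) :
    (cR ^ 2 * uR - cL ^ 2 * uL) * uAvg
      = (cR ^ 2 * uR ^ 2 - cL ^ 2 * uL ^ 2) / 2 + (cR ^ 2 - cL ^ 2) * uAvg ^ 2 / 2 := by
  unfold am at hu
  linear_combination ((cR * uR - cL * uL) - (cR - cL) * uAvg) * hu

theorem thermal_jump {γ cL cR dL dR vL vR M₁ M₅ vAvg pAvg : ℝ} (hγ : γ ≠ 0)
    (hγ₁ : γ - 1 ≠ 0) (hM₅ : M₅ ≠ 0) (hv : vAvg * am cL cR = am (cL * vL) (cR * vR))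
    (hp : pAvg * am cL cR = am dL dR) :
    ((dR - dL) / M₅ + (γ + 1) / (γ - 1) * ((cR - cL) / M₁)) * (am cL cR * M₅ * vAvg)
      + (cR ^ 2 * vR - cL ^ 2 * vL) * pAvg
      - (cR ^ 2 - cL ^ 2) * (γ * vAvg
          * ((γ + 1) / (2 * γ) * M₅ / M₁ + (γ - 1) / (2 * γ) * pAvg) / (γ - 1))
      = cR * dR * vR - cL * dL * vL := by
  -- the `M₁` terms cancel; the rest is the product rule `⟦d·cv⟧ = ⟦d⟧⟨cv⟩ + ⟨d⟩⟦cv⟧`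
  calc _ = (dR - dL) * am cL cR * vAvg + (cR ^ 2 * vR - cL ^ 2 * vL) * pAvg
        - (cR - cL) * am cL cR * vAvg * pAvg := by
        unfold am; field_simp; ring
    _ = _ := by
        unfold am at *
        linear_combination ((dR - dL) - (cR - cL) * pAvg) * hv + (cR * vR - cL * vL) * hp

theorem magnetic_jump {cL cR uL uR vL vR wL wR B₁L B₁R B₂L B₂R B₃L B₃R uAvg vAvg wAvg : ℝ}
    (hu : uAvg * am (cL * cL) (cR * cR) = am (cL * (cL * uL)) (cR * (cR * uR)))
    (hv : vAvg * am (cL * cL) (cR * cR) = am (cL * (cL * vL)) (cR * (cR * vR)))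
    (hw : wAvg * am (cL * cL) (cR * cR) = am (cL * (cL * wL)) (cR * (cR * wR))) :
    (cR ^ 2 * uR - cL ^ 2 * uL) * -am (B₁L * B₂L) (B₁R * B₂R)
      + (cR ^ 2 * vR - cL ^ 2 * vL) * ((am (B₁L ^ 2) (B₁R ^ 2) + am (B₂L ^ 2) (B₂R ^ 2)
          + am (B₃L ^ 2) (B₃R ^ 2)) / 2 - am (B₂L ^ 2) (B₂R ^ 2))
      + (cR ^ 2 * wR - cL ^ 2 * wL) * -am (B₂L * B₃L) (B₂R * B₃R)
      - (cR ^ 2 - cL ^ 2) * (vAvg * am B₁L B₁R ^ 2 - uAvg * am B₁L B₁R * am B₂L B₂R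
          + vAvg * am B₃L B₃R ^ 2 - wAvg * am B₂L B₂R * am B₃L B₃R)
      + (cR ^ 2 * B₁R - cL ^ 2 * B₁L) * (vAvg * am B₁L B₁R - uAvg * am B₂L B₂R)
      + (cR ^ 2 * B₃R - cL ^ 2 * B₃L) * (vAvg * am B₃L B₃R - wAvg * am B₂L B₂R)
      = (cR ^ 2 * vR * (B₁R ^ 2 + B₂R ^ 2 + B₃R ^ 2) / 2
          - cL ^ 2 * vL * (B₁L ^ 2 + B₂L ^ 2 + B₃L ^ 2) / 2)
        - (cR ^ 2 * B₂R * (uR * B₁R + vR * B₂R + wR * B₃R)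
          - cL ^ 2 * B₂L * (uL * B₁L + vL * B₂L + wL * B₃L))
        + (B₂R - B₂L) * (am (cL * (cL * uL)) (cR * (cR * uR)) * am B₁L B₁R
          + am (cL * (cL * vL)) (cR * (cR * vR)) * am B₂L B₂R
          + am (cL * (cL * wL)) (cR * (cR * wR)) * am B₃L B₃R) := by
  unfold am at *
  linear_combination
    -(B₁R - B₁L) * ((B₂L + B₂R) / 2) * hu - (B₃R - B₃L) * ((B₂L + B₂R) / 2) * hw
    + ((B₁L + B₁R) / 2 * (B₁R - B₁L) + (B₃L + B₃R) / 2 * (B₃R - B₃L)) * hv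

namespace MHD

section

variable (S : MHD) (hρ : 0 < S.ρ) (hp : 0 < S.p)
include hρ hp

theorem z_zero_pos : 0 < S.z 0 := Real.sqrt_pos.2 (div_pos hρ hp)

theorem z_four_pos : 0 < S.z 4 := Real.sqrt_pos.2 (mul_pos hρ hp)

theorem z_zero_sq : S.z 0 ^ 2 = S.ρ / S.p := Real.sq_sqrt (div_pos hρ hp).le

theorem z_zero_mul_z_four : S.z 0 * S.z 4 = S.ρ := by
  have : S.ρ / S.p * (S.ρ * S.p) = S.ρ ^ 2 := by field_simp
  change √(S.ρ / S.p) * √(S.ρ * S.p) = S.ρ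
  rw [← Real.sqrt_mul (div_pos hρ hp).le, this, Real.sqrt_sq hρ.le]

theorem z_four_div_z_zero : S.z 4 / S.z 0 = S.p := by
  have : S.ρ * S.p / (S.ρ / S.p) = S.p ^ 2 := by field_simp
  change √(S.ρ * S.p) / √(S.ρ / S.p) = S.p
  rw [← Real.sqrt_div (mul_pos hρ hp).le, this, Real.sqrt_sq hp.le]

theorem ent_eq_log_z (γ : ℝ) :
    S.ent γ
      = Real.log (S.z 4) - Real.log (S.z 0) - γ * (Real.log (S.z 0) + Real.log (S.z 4)) := by
  have hc := (S.z_zero_pos hρ hp).ne'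
  have hd := (S.z_four_pos hρ hp).ne'
  rw [ent, ← S.z_four_div_z_zero hρ hp, ← S.z_zero_mul_z_four hρ hp, Real.log_div hd hc,
    Real.log_mul hc hd]

theorem entVar_eq_z (γ : ℝ) :
    S.entVar γ = ![(γ - S.ent γ) / (γ - 1) - S.z 0 ^ 2 * S.uSq / 2,
      S.z 0 ^ 2 * S.u, S.z 0 ^ 2 * S.v, S.z 0 ^ 2 * S.w, -S.z 0 ^ 2,
      S.z 0 ^ 2 * S.B1, S.z 0 ^ 2 * S.B2, S.z 0 ^ 2 * S.B3] := by
  rw [entVar, S.z_zero_sq hρ hp]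
  ext i
  fin_cases i <;>
    simp only [Fin.zero_eta, Fin.mk_one, Fin.reduceFinMk, Matrix.cons_val] <;> ring

theorem potentialY_eq_z :
    S.ρ * S.v + S.ρ * S.v * S.BSq / (2 * S.p) - S.ρ * S.B2 * S.uDotB / S.p
      = S.z 0 * S.z 4 * S.v + S.z 0 ^ 2 * (S.v * S.BSq / 2 - S.B2 * S.uDotB) := by
  rw [S.z_zero_mul_z_four hρ hp, S.z_zero_sq hρ hp]
  ring

end

theorem entVar_zero_sub {γ : ℝ} (hγ : γ ≠ 1) {L R : MHD} (hρL : 0 < L.ρ) (hpL : 0 < L.p)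
    (hρR : 0 < R.ρ) (hpR : 0 < R.p) :
    R.entVar γ 0 - L.entVar γ 0
      = (R.z 4 - L.z 4) / lm (L.z 4) (R.z 4)
          + (γ + 1) / (γ - 1) * ((R.z 0 - L.z 0) / lm (L.z 0) (R.z 0))
        - (R.z 0 ^ 2 * R.uSq / 2 - L.z 0 ^ 2 * L.uSq / 2) := by
  have hγ₁ : γ - 1 ≠ 0 := sub_ne_zero.2 hγ
  rw [L.entVar_eq_z hρL hpL, R.entVar_eq_z hρR hpR, L.ent_eq_log_z hρL hpL,
    R.ent_eq_log_z hρR hpR,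
    ← log_sub_log_eq_div_lm (L.z_four_pos hρL hpL) (R.z_four_pos hρR hpR),
    ← log_sub_log_eq_div_lm (L.z_zero_pos hρL hpL) (R.z_zero_pos hρR hpR)]
  simp only [Matrix.cons_val_zero]
  field_simp
  ring

end MHD

open MHD in
/-- entropy conservation of the EC flux in the y-direction:
⟦v⃗⟧·g* = ⟦ρv⟧ + ⟦ρv‖B⃗‖²/(2p)⟧ − ⟦ρB₂(u⃗·B⃗)/p⟧ + ⟦B₂⟧·(⟨z₁z₂⟩⟨z₆⟩ + ⟨z₁z₃⟩⟨z₇⟩ + ⟨z₁z₄⟩⟨z₈⟩). -/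
theorem ec_flux_entropy_conservation_y (γ : ℝ) (hγ : 1 < γ) (L R : MHD)
    (hρL : 0 < L.ρ) (hpL : 0 < L.p) (hρR : 0 < R.ρ) (hpR : 0 < R.p) :
    (∑ i : Fin 8, (R.entVar γ i - L.entVar γ i) * ecFluxY γ L R i) =
      (R.ρ * R.v - L.ρ * L.v)
      + (R.ρ * R.v * R.BSq / (2 * R.p) - L.ρ * L.v * L.BSq / (2 * L.p))
      - (R.ρ * R.B2 * R.uDotB / R.p - L.ρ * L.B2 * L.uDotB / L.p)
      + (R.B2 - L.B2) * srcX L R := by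
  have hcL := L.z_zero_pos hρL hpL
  have hcR := R.z_zero_pos hρR hpR
  have hc : zA L R 0 ≠ 0 := by unfold zA am; positivity
  have hc₂ : zP L R 0 0 ≠ 0 := by unfold zP am; positivity
  have thermal := thermal_jump (cL := L.z 0) (cR := R.z 0) (M₁ := lm (L.z 0) (R.z 0))
    (by positivity : γ ≠ 0) (by linarith : γ - 1 ≠ 0)
    (lm_pos (L.z_four_pos hρL hpL) (R.z_four_pos hρR hpR)).ne'
    (div_mul_cancel₀ (zA L R 2) hc) (div_mul_cancel₀ (zA L R 4) hc)
  have kinetic_u := kinetic_jump (cL := L.z 0) (cR := R.z 0) (div_mul_cancel₀ (zA L R 1) hc)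
  have kinetic_v := kinetic_jump (cL := L.z 0) (cR := R.z 0) (div_mul_cancel₀ (zA L R 2) hc)
  have kinetic_w := kinetic_jump (cL := L.z 0) (cR := R.z 0) (div_mul_cancel₀ (zA L R 3) hc)
  have magnetic := magnetic_jump (cL := L.z 0) (cR := R.z 0) (B₁L := L.B1) (B₁R := R.B1)
    (B₂L := L.B2) (B₂R := R.B2) (B₃L := L.B3) (B₃R := R.B3)
    (div_mul_cancel₀ (zP L R 0 1) hc₂) (div_mul_cancel₀ (zP L R 0 2) hc₂)
    (div_mul_cancel₀ (zP L R 0 3) hc₂)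
  rw [Fin.sum_univ_eight, entVar_zero_sub hγ.ne' hρL hpL hρR hpR, L.entVar_eq_z hρL hpL,
    R.entVar_eq_z hρR hpR]
  -- `ρ̂ v̂₁` is the common factor of the kinetic-energy terms of `g*`
  linear_combination (norm := skip) thermal + magnetic
    + zA L R 0 * lm (L.z 4) (R.z 4) * (zA L R 2 / zA L R 0)
      * (kinetic_u + kinetic_v + kinetic_w)
    - R.potentialY_eq_z hρR hpR + L.potentialY_eq_z hρL hpL
  simp only [ecFluxY, srcX, uSq, BSq, uDotB, zA, zP, am, z, Matrix.cons_val]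
  ring
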